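/- arXiv:2108.04094 — 2 statements merged into one kernel-verified Lean document; each statement's English description precedes it below -/
import Mathlib

section
/- Let A be a commutative ring, let R = A[u], π ∈ A, and let E ⊆ R[1/(u-π)]^d be a finitely generated projective R-submodule with (u-π)^a R^d ⊆ E ⊆ (u-π)^{-a} R^d for some a ≥ 0. Define E* := Hom_R(E, R), viewed inside R[1/(u-π)]^d via the standard pairing on R[1/(u-π)]^d extending the dual basis identification (R^d)* ≅ R^d. Then E* is finitely generated projective of the same rank, satisfies (u-π)^a R^d ⊆ E* ⊆ (u-π)^{-a} R^d, and E** = E. Moreover, if E is free with basis the columns of a matrix X ∈ GL_d(R[1/(u-π)]), then E* is free with basis the columns of the inverse transpose (X^{-1})^t. -/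
open Polynomial

/-- The localization `A[u][1/(u-π)]`. -/
abbrev Sloc (A : Type*) [CommRing A] (π : A) :=
  Localization.Away ((X : Polynomial A) - C π)

/-- The standard lattice `R^d` inside `(A[u][1/(u-π)])^d`. -/
noncomputable def stdLat (A : Type*) [CommRing A] (π : A) (d : ℕ) :
    Submodule (Polynomial A) (Fin d → Sloc A π) :=
  Submodule.span (Polynomial A) (Set.range fun i : Fin d => Pi.single i (1 : Sloc A π))

/-- Scaling a lattice by an element `c` of the localization. -/
noncomputable def scaleLat (A : Type*) [CommRing A] (π : A) (d : ℕ) (c : Sloc A π)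
    (N : Submodule (Polynomial A) (Fin d → Sloc A π)) :
    Submodule (Polynomial A) (Fin d → Sloc A π) :=
  Submodule.map ((LinearMap.lsmul (Sloc A π) (Fin d → Sloc A π) c).restrictScalars
    (Polynomial A)) N

/-- The dual lattice `{ v : ⟨v, E⟩ ⊆ R }` for the standard pairing. -/
noncomputable def dualSet (A : Type*) [CommRing A] (π : A) (d : ℕ)
    (E : Submodule (Polynomial A) (Fin d → Sloc A π)) : Set (Fin d → Sloc A π) :=
  { v | ∀ w ∈ E, (∑ i, v i * w i) ∈ (algebraMap (Polynomial A) (Sloc A π)).range }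

/-!
Write `t = (u - π)^a`. A finitely generated projective `E` has generators `w_k ∈ E` and
functionals `s_k : E → R` with `x = ∑ s_k(x) w_k`. Because `t R^d ⊆ E ⊆ t⁻¹ R^d`, every
functional on `E` is the pairing with some vector `v_k`. For the matrix `W` with columns `w_k`
and `V` with rows `v_k` this gives `W V = 1`, while `V W` has entries in `R`. For any such pair
the dual of the column span of `W` is the row span of `V` (write `z = (z W) V`), and by
transposing vice versa; the row span of `V` is a retract of `R^n`, hence projective. Duality
reverses inclusions and exchanges `t R^d` with `t⁻¹ R^d`, which gives the bounds on `E*`, and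
these squeeze its rank. When `E` is free on the columns of `X`, the same applies to the pair
`W = X`, `V = X⁻¹`.
-/

open Matrix

theorem rank_eq_of_mem_Icc {R M : Type*} [Ring R] [AddCommGroup M] [Module R M]
    {L L' N N' : Submodule R M} (hL : Module.rank R L' = Module.rank R L)
    (hN : N ∈ Set.Icc L L') (hN' : N' ∈ Set.Icc L L') :
    Module.rank R N = Module.rank R N' :=
  le_antisymm ((Submodule.rank_mono hN.2).trans (hL ▸ Submodule.rank_mono hN'.1))
    ((Submodule.rank_mono hN'.2).trans (hL ▸ Submodule.rank_mono hN.1))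

section DualLattice

variable {R S ι n : Type*} [CommRing R] [CommRing S] [Algebra R S] [Fintype n]

theorem vecMul_mem_span_row (V : Matrix n ι S) {c : n → S}
    (hc : ∀ k, c k ∈ (1 : Submodule R S)) :
    c ᵥ* V ∈ Submodule.span R (Set.range V.row) := by
  rw [vecMul_eq_sum]
  refine Submodule.sum_mem _ fun k _ => ?_
  obtain ⟨r, hr⟩ := Submodule.mem_one.1 (hc k)
  rw [← hr, algebraMap_smul]
  exact Submodule.smul_mem _ r (Submodule.subset_span ⟨k, rfl⟩)

variable [Fintype ι]

/-- `E*` for the standard pairing; `(1 : Submodule R S)` is the image of `R` in `S`. -/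
def dualLattice (E : Submodule R (ι → S)) : Submodule R (ι → S) where
  carrier := {v | ∀ w ∈ E, v ⬝ᵥ w ∈ (1 : Submodule R S)}
  add_mem' hv hv' w hw := by simpa only [add_dotProduct] using add_mem (hv w hw) (hv' w hw)
  zero_mem' w _ := by simpa only [zero_dotProduct] using zero_mem (1 : Submodule R S)
  smul_mem' r v hv w hw := by
    simpa only [smul_dotProduct] using Submodule.smul_mem _ r (hv w hw)

theorem mem_dualLattice {E : Submodule R (ι → S)} {v : ι → S} :
    v ∈ dualLattice E ↔ ∀ w ∈ E, v ⬝ᵥ w ∈ (1 : Submodule R S) :=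
  Iff.rfl

theorem dualLattice_anti {E F : Submodule R (ι → S)} (h : E ≤ F) :
    dualLattice F ≤ dualLattice E :=
  fun _ hv w hw => hv w (h hw)

theorem span_le_dualLattice_span {s t : Set (ι → S)}
    (h : ∀ v ∈ s, ∀ w ∈ t, v ⬝ᵥ w ∈ (1 : Submodule R S)) :
    Submodule.span R s ≤ dualLattice (Submodule.span R t) := by
  rw [Submodule.span_le]
  intro v hv w hw
  induction hw using Submodule.span_induction with
  | mem w hw => exact h v hv w hw
  | zero => simpa only [dotProduct_zero] using zero_mem (1 : Submodule R S)
  | add w w' _ _ hw hw' => simpa only [dotProduct_add] using add_mem hw hw'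
  | smul r w _ hw => simpa only [dotProduct_smul] using Submodule.smul_mem _ r hw

variable [DecidableEq ι]

theorem dualLattice_span_col {W : Matrix ι n S} {V : Matrix n ι S} (hWV : W * V = 1)
    (hVW : ∀ k l, (V * W) k l ∈ (1 : Submodule R S)) :
    dualLattice (Submodule.span R (Set.range W.col)) = Submodule.span R (Set.range V.row) := by
  refine le_antisymm (fun z hz => ?_) ?_
  · have hzW : ∀ k, (z ᵥ* W) k ∈ (1 : Submodule R S) :=
      fun k => hz _ (Submodule.subset_span ⟨k, rfl⟩)
    simpa only [vecMul_vecMul, hWV, vecMul_one] using vecMul_mem_span_row V hzW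
  · refine span_le_dualLattice_span ?_
    rintro _ ⟨k, rfl⟩ _ ⟨l, rfl⟩
    exact hVW k l

theorem dualLattice_span_row {W : Matrix ι n S} {V : Matrix n ι S} (hWV : W * V = 1)
    (hVW : ∀ k l, (V * W) k l ∈ (1 : Submodule R S)) :
    dualLattice (Submodule.span R (Set.range V.row)) = Submodule.span R (Set.range W.col) :=
  dualLattice_span_col (W := Vᵀ) (V := Wᵀ) (by rw [← transpose_mul, hWV, transpose_one])
    (fun k l => by rw [← transpose_mul]; exact hVW l k)

theorem dualLattice_span_col_of_mul_eq_one {W V : Matrix ι ι S} (hWV : W * V = 1)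
    (hVW : V * W = 1) :
    dualLattice (Submodule.span R (Set.range W.col)) = Submodule.span R (Set.range V.row) := by
  refine dualLattice_span_col hWV fun k l => ?_
  rw [hVW, one_apply]
  split_ifs
  exacts [Submodule.mem_one.2 ⟨1, map_one _⟩, zero_mem _]

theorem projective_span_row (hinj : Function.Injective (algebraMap R S)) {W : Matrix ι n S}
    {V : Matrix n ι S} (hWV : W * V = 1) (hVW : ∀ k l, (V * W) k l ∈ (1 : Submodule R S)) :
    Module.Projective R (Submodule.span R (Set.range V.row)) := by
  have hcoord : ∀ z ∈ Submodule.span R (Set.range V.row), ∀ k,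
      (z ᵥ* W) k ∈ LinearMap.range (Algebra.linearMap R S) := by
    rw [← dualLattice_span_col hWV hVW, ← Submodule.one_eq_range]
    exact fun z hz k => hz _ (Submodule.subset_span ⟨k, rfl⟩)
  set L := Submodule.span R (Set.range V.row)
  let e := LinearEquiv.ofInjective (Algebra.linearMap R S) hinj
  let coords : L →ₗ[R] n → R := LinearMap.pi fun k => e.symm ∘ₗ LinearMap.codRestrict _
    (LinearMap.proj k ∘ₗ (vecMulLinear W).restrictScalars R ∘ₗ L.subtype)
    (fun z => hcoord z z.2 k)
  let combine : (n → R) →ₗ[R] L := LinearMap.codRestrict L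
    ((vecMulLinear V).restrictScalars R ∘ₗ LinearMap.compLeft (Algebra.linearMap R S) n)
    (fun c => vecMul_mem_span_row V fun k => Submodule.mem_one.2 ⟨c k, rfl⟩)
  refine Module.Projective.of_split coords combine (LinearMap.ext fun z => Subtype.ext ?_)
  have hlift : ∀ k, algebraMap R S (coords z k) = (z ᵥ* W) k := fun k =>
    congrArg Subtype.val (e.apply_symm_apply ⟨_, hcoord z z.2 k⟩)
  change (fun k => algebraMap R S (coords z k)) ᵥ* V = z
  simp only [hlift, vecMul_vecMul, hWV, vecMul_one]

theorem exists_dotProduct_eq_algebraMap {E : Submodule R (ι → S)} {t : R}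
    (ht : IsUnit (algebraMap R S t)) (hlow : ∀ j, t • Pi.single j 1 ∈ E)
    (hhigh : ∀ x ∈ E, ∀ i, algebraMap R S t * x i ∈ (1 : Submodule R S))
    (f : E →ₗ[R] R) :
    ∃ v : ι → S, ∀ x : E, v ⬝ᵥ x = algebraMap R S (f x) := by
  -- `v_j = c⁻¹ f(t e_j)`; the identity is checked after multiplying by `c²`, as `c x ∈ R^d`.
  set c := algebraMap R S t
  obtain ⟨c', hc⟩ := ht.exists_right_inv
  let y : ι → E := fun j => ⟨t • Pi.single j 1, hlow j⟩
  refine ⟨fun j => c' * algebraMap R S (f (y j)), fun x => ?_⟩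
  choose r hr using fun i => Submodule.mem_one.1 (hhigh x x.2 i)
  have hx : (t * t) • x = ∑ j, r j • y j := by
    ext i
    simp [y, hr, Pi.single_apply, Algebra.smul_def, c, mul_comm, mul_left_comm]
  apply (ht.mul ht).mul_left_cancel
  calc c * c * ∑ j, c' * algebraMap R S (f (y j)) * (x : ι → S) j
      = ∑ j, algebraMap R S (r j * f (y j)) := by
        simp only [Finset.mul_sum, map_mul, hr]
        refine Finset.sum_congr rfl fun j _ => ?_
        linear_combination (c * (x : ι → S) j * algebraMap R S (f (y j))) * hc
    _ = algebraMap R S (f ((t * t) • x)) := by simp [hx, map_sum]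
    _ = c * c * algebraMap R S (f x) := by simp [c]

theorem exists_mul_eq_one_of_projective {E : Submodule R (ι → S)} [Module.Finite R E]
    [Module.Projective R E] {t : R} (ht : IsUnit (algebraMap R S t))
    (hlow : ∀ j, t • Pi.single j 1 ∈ E)
    (hhigh : ∀ x ∈ E, ∀ i, algebraMap R S t * x i ∈ (1 : Submodule R S)) :
    ∃ (n : ℕ) (W : Matrix ι (Fin n) S) (V : Matrix (Fin n) ι S),
      E = Submodule.span R (Set.range W.col) ∧ W * V = 1 ∧
        ∀ k l, (V * W) k l ∈ (1 : Submodule R S) := by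
  obtain ⟨n, g, hg⟩ := Module.Finite.exists_fin (R := R) (M := E)
  have hsurj : Function.Surjective (Fintype.linearCombination R g) := by
    rw [← LinearMap.range_eq_top, Fintype.range_linearCombination, hg]
  obtain ⟨s, hs⟩ := Module.projective_lifting_property _ LinearMap.id hsurj
  have hrecon : ∀ x : E, ∑ k, s x k • g k = x := fun x => by
    simpa [Fintype.linearCombination_apply] using LinearMap.congr_fun hs x
  choose v hv using fun k =>
    exists_dotProduct_eq_algebraMap ht hlow hhigh (LinearMap.proj k ∘ₗ s)
  let W : Matrix ι (Fin n) S := Matrix.of fun i k => (g k : ι → S) i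
  have hWV : ∀ x : E, (W * Matrix.of v) *ᵥ x = x := fun x => by
    have hVx : Matrix.of v *ᵥ (x : ι → S) = fun k => algebraMap R S (s x k) :=
      funext fun k => hv k x
    rw [← mulVec_mulVec, hVx]
    conv_rhs => rw [← hrecon x]
    ext i
    simp [mulVec, dotProduct, W, Algebra.smul_def, mul_comm]
  refine ⟨n, W, Matrix.of v, ?_, ?_,
    fun k l => Submodule.mem_one.2 ⟨s (g l) k, (hv k (g l)).symm⟩⟩
  · refine le_antisymm (fun x hx => ?_) (Submodule.span_le.2 ?_)
    · lift x to E using hx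
      rw [← hrecon x, Submodule.coe_sum]
      exact Submodule.sum_mem _ fun k _ =>
        Submodule.smul_mem _ _ (Submodule.subset_span ⟨k, rfl⟩)
    · rintro _ ⟨k, rfl⟩
      exact (g k).2
  · refine ext_of_mulVec_single fun j => ht.smul_left_cancel.1 ?_
    rw [← mulVec_smul, one_mulVec, algebraMap_smul]
    exact hWV ⟨_, hlow j⟩

end DualLattice

section Lattice

variable {A : Type*} [CommRing A] {π : A} {d : ℕ}

theorem mem_stdLat_iff {x : Fin d → Sloc A π} :
    x ∈ stdLat A π d ↔ ∀ i, x i ∈ (1 : Submodule A[X] (Sloc A π)) := by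
  constructor
  · intro hx
    have hle : stdLat A π d ≤ Submodule.pi Set.univ fun _ => 1 := by
      refine Submodule.span_le.2 ?_
      rintro _ ⟨j, rfl⟩ i -
      rcases eq_or_ne i j with rfl | hij
      · simpa using Submodule.mem_one.2 ⟨1, map_one _⟩
      · simp [hij]
    exact fun i => hle hx i (Set.mem_univ i)
  · intro hx
    choose r hr using fun i => Submodule.mem_one.1 (hx i)
    rw [← Finset.univ_sum_single x]
    refine Submodule.sum_mem _ fun i _ => ?_
    have hi : Pi.single i (1 : Sloc A π) ∈ stdLat A π d := Submodule.subset_span ⟨i, rfl⟩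
    convert Submodule.smul_mem _ (r i) hi using 1
    ext j
    rcases eq_or_ne j i with rfl | hji <;> simp [*, Algebra.smul_def]

theorem mem_scaleLat_iff {c c' : Sloc A π} (hc : c * c' = 1)
    {N : Submodule A[X] (Fin d → Sloc A π)} {x : Fin d → Sloc A π} :
    x ∈ scaleLat A π d c N ↔ c' • x ∈ N := by
  simp only [scaleLat, Submodule.mem_map, LinearMap.restrictScalars_apply, LinearMap.lsmul_apply]
  constructor
  · rintro ⟨y, hy, rfl⟩
    rwa [smul_smul, mul_comm, hc, one_smul]
  · exact fun hx => ⟨c' • x, hx, by rw [smul_smul, hc, one_smul]⟩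

theorem rank_scaleLat {c c' : Sloc A π} (hc : c * c' = 1)
    (N : Submodule A[X] (Fin d → Sloc A π)) :
    Module.rank A[X] (scaleLat A π d c N) = Module.rank A[X] N := by
  have hinj : Function.Injective
      ((LinearMap.lsmul (Sloc A π) (Fin d → Sloc A π) c).restrictScalars A[X]) :=
    fun x y hxy => (IsUnit.of_mul_eq_one c' hc).smul_left_cancel.1 hxy
  exact (Submodule.equivMapOfInjective _ hinj N).rank_eq.symm

theorem dualLattice_stdLat : dualLattice (stdLat A π d) = stdLat A π d := by
  ext z
  rw [mem_stdLat_iff]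
  refine ⟨fun hz i => ?_, fun hz w hw => ?_⟩
  · simpa using hz _ (Submodule.subset_span ⟨i, rfl⟩)
  · rw [mem_stdLat_iff] at hw
    exact Submodule.sum_mem _ fun i _ => by simpa using Submodule.mul_mem_mul (hz i) (hw i)

theorem dualLattice_scaleLat {c c' : Sloc A π} (hc : c * c' = 1)
    (N : Submodule A[X] (Fin d → Sloc A π)) :
    dualLattice (scaleLat A π d c N) = scaleLat A π d c' (dualLattice N) := by
  ext z
  rw [mem_scaleLat_iff (mul_comm c c' ▸ hc), mem_dualLattice, mem_dualLattice]
  simp only [scaleLat, Submodule.mem_map, LinearMap.restrictScalars_apply, LinearMap.lsmul_apply,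
    forall_exists_index, and_imp, forall_apply_eq_imp_iff₂, dotProduct_smul, smul_dotProduct]

theorem dualLattice_le_scaleLat_stdLat {c c' : Sloc A π} (hc : c * c' = 1)
    {E : Submodule A[X] (Fin d → Sloc A π)} (h : scaleLat A π d c (stdLat A π d) ≤ E) :
    dualLattice E ≤ scaleLat A π d c' (stdLat A π d) := by
  simpa only [dualLattice_scaleLat hc, dualLattice_stdLat] using dualLattice_anti h

theorem scaleLat_stdLat_le_dualLattice {c c' : Sloc A π} (hc : c * c' = 1)
    {E : Submodule A[X] (Fin d → Sloc A π)} (h : E ≤ scaleLat A π d c' (stdLat A π d)) :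
    scaleLat A π d c (stdLat A π d) ≤ dualLattice E := by
  simpa only [dualLattice_scaleLat (mul_comm c c' ▸ hc), dualLattice_stdLat]
    using dualLattice_anti h

theorem dualSet_eq_dualLattice (E : Submodule A[X] (Fin d → Sloc A π)) :
    dualSet A π d E = dualLattice E := by
  ext v
  simp [dualSet, mem_dualLattice, Submodule.mem_one, dotProduct]

end Lattice

theorem stmt_11 (A : Type*) [CommRing A] (π : A) (d a : ℕ)
    (E : Submodule (Polynomial A) (Fin d → Sloc A π))
    (hFG : E.FG) (hproj : Module.Projective (Polynomial A) E)
    (hlow : scaleLat A π d (algebraMap (Polynomial A) (Sloc A π)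
      (((X : Polynomial A) - C π) ^ a)) (stdLat A π d) ≤ E)
    (hhigh : E ≤ scaleLat A π d
      ((IsLocalization.Away.invSelf (S := Sloc A π) ((X : Polynomial A) - C π)) ^ a)
      (stdLat A π d)) :
    ∃ Estar : Submodule (Polynomial A) (Fin d → Sloc A π),
      (Estar : Set (Fin d → Sloc A π)) = dualSet A π d E ∧
      Estar.FG ∧ Module.Projective (Polynomial A) Estar ∧
      Module.rank (Polynomial A) Estar = Module.rank (Polynomial A) E ∧
      scaleLat A π d (algebraMap (Polynomial A) (Sloc A π)
        (((X : Polynomial A) - C π) ^ a)) (stdLat A π d) ≤ Estar ∧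
      Estar ≤ scaleLat A π d
        ((IsLocalization.Away.invSelf (S := Sloc A π) ((X : Polynomial A) - C π)) ^ a)
        (stdLat A π d) ∧
      dualSet A π d Estar = (E : Set (Fin d → Sloc A π)) ∧
      ∀ (Xm Xi : Matrix (Fin d) (Fin d) (Sloc A π)),
        Xm * Xi = 1 → Xi * Xm = 1 →
        E = Submodule.span (Polynomial A) (Set.range fun j : Fin d => fun i => Xm i j) →
        Estar = Submodule.span (Polynomial A)
          (Set.range fun j : Fin d => fun i => Xi j i) := by
  set t : A[X] := (X - C π) ^ a
  have hinv : algebraMap A[X] (Sloc A π) t * IsLocalization.Away.invSelf (X - C π) ^ a = 1 := by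
    rw [map_pow, ← mul_pow, IsLocalization.Away.mul_invSelf, one_pow]
  have hinv' : IsLocalization.Away.invSelf (X - C π) ^ a * algebraMap A[X] (Sloc A π) t = 1 := by
    rw [mul_comm, hinv]
  have hinj : Function.Injective (algebraMap A[X] (Sloc A π)) :=
    IsLocalization.injective _ (Submonoid.powers_le.2 (monic_X_sub_C π).mem_nonZeroDivisors)
  have : Module.Finite A[X] E := Module.Finite.iff_fg.2 hFG
  obtain ⟨n, W, V, hEW, hWV, hVW⟩ := exists_mul_eq_one_of_projective
    (IsUnit.of_mul_eq_one _ hinv)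
    (fun j => by simpa using hlow ⟨Pi.single j 1, Submodule.subset_span ⟨j, rfl⟩, rfl⟩)
    (fun x hx => mem_stdLat_iff.1 ((mem_scaleLat_iff hinv').1 (hhigh hx)))
  have hdual : dualLattice E = Submodule.span A[X] (Set.range V.row) :=
    hEW ▸ dualLattice_span_col hWV hVW
  have hlow' := scaleLat_stdLat_le_dualLattice hinv hhigh
  have hhigh' := dualLattice_le_scaleLat_stdLat hinv hlow
  refine ⟨dualLattice E, (dualSet_eq_dualLattice E).symm,
    hdual ▸ Submodule.fg_span (Set.finite_range _), hdual ▸ projective_span_row hinj hWV hVW,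
    rank_eq_of_mem_Icc (by rw [rank_scaleLat hinv, rank_scaleLat hinv'])
      ⟨hlow', hhigh'⟩ ⟨hlow, hhigh⟩, hlow', hhigh', ?_, ?_⟩
  · rw [dualSet_eq_dualLattice, hdual, dualLattice_span_row hWV hVW, ← hEW]
  · intro Xm Xi hXmXi hXiXm hE
    exact hE ▸ dualLattice_span_col_of_mul_eq_one hXmXi hXiXm
end

section
/- Let A be a commutative ring and let E(u) ∈ A[u] be monic of degree e that factors as E(u) = ∏_{κ=1}^{e} (u - π_κ) with π_κ ∈ A. Let Fil^• be a decreasing filtration of A^d by direct summands, concentrated in degrees [−n, 0] (so Fil^{-n} = A^d and Fil^1 = 0), and define, for a fixed κ, the A[u]-module E := Σ_{i = 0}^{n} (u - π_κ)^{i} · A[u] · Fil^{-i} ⊆ A[u]^d (embedding A^d as constant vectors). Then ∇(E) ⊆ (u/(u - π_κ)) · E, where ∇ = u·d/du acts coordinatewise on A[u]^d; in particular E(u)·∇(E) ⊆ u·E inside A[u][1/E(u)]^d. -/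
/-!
The elements `x ∈ E` with `(u - π) ∇x ∈ u E` form a submodule, by the Leibniz rule for `∇`, and
it contains the generators `(u - π)^i v` of `E` because `(u - π) d/du (u - π)^i = i (u - π)^i`.
Since `u - π_κ` divides `E(u)`, the second claim follows from the first.
-/

open Polynomial

namespace Polynomial

variable {R ι : Type*} [CommRing R]

theorem X_sub_C_mul_derivative_X_sub_C_pow (a : R) (i : ℕ) :
    (X - C a) * derivative ((X - C a) ^ i) = (i : R[X]) * (X - C a) ^ i := by
  cases i with
  | zero => simp
  | succ m =>
    rw [derivative_X_sub_C_pow, Nat.add_sub_cancel, C_eq_natCast]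
    ring

/-- The elements `x ∈ E` with `f • ∇x ∈ X • E`, where `∇ = X • d/dX` acts coordinatewise. -/
noncomputable def nablaPullback (E : Submodule R[X] (ι → R[X])) (f : R[X]) :
    Submodule R[X] (ι → R[X]) where
  carrier := {x | x ∈ E ∧ ∃ z ∈ E, ∀ j, f * (X * derivative (x j)) = X * z j}
  zero_mem' := ⟨E.zero_mem, 0, E.zero_mem, fun j => by simp⟩
  add_mem' := by
    rintro x y ⟨hx, zx, hzx, hfx⟩ ⟨hy, zy, hzy, hfy⟩
    refine ⟨E.add_mem hx hy, zx + zy, E.add_mem hzx hzy, fun j => ?_⟩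
    simp only [Pi.add_apply, derivative_add]
    linear_combination hfx j + hfy j
  smul_mem' := by
    rintro g x ⟨hx, z, hz, hfx⟩
    refine ⟨E.smul_mem g hx, (f * derivative g) • x + g • z,
      E.add_mem (E.smul_mem _ hx) (E.smul_mem g hz), fun j => ?_⟩
    simp only [Pi.smul_apply, Pi.add_apply, smul_eq_mul, derivative_mul]
    linear_combination g * hfx j

theorem nablaPullback_mono {E : Submodule R[X] (ι → R[X])} {f g : R[X]} (hfg : f ∣ g) :
    nablaPullback E f ≤ nablaPullback E g := by
  obtain ⟨h, rfl⟩ := hfg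
  rintro x ⟨hx, z, hz, hfx⟩
  refine ⟨hx, h • z, E.smul_mem h hz, fun j => ?_⟩
  simp only [Pi.smul_apply, smul_eq_mul]
  linear_combination h * hfx j

theorem X_sub_C_pow_mul_C_mem_nablaPullback {E : Submodule R[X] (ι → R[X])} (a : R) (i : ℕ)
    (v : ι → R) (hv : (fun j => (X - C a) ^ i * C (v j)) ∈ E) :
    (fun j => (X - C a) ^ i * C (v j)) ∈ nablaPullback E (X - C a) := by
  refine ⟨hv, (i : R[X]) • fun j => (X - C a) ^ i * C (v j), E.smul_mem _ hv, fun j => ?_⟩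
  simp only [Pi.smul_apply, smul_eq_mul, derivative_mul, derivative_C, mul_zero, add_zero]
  linear_combination X * C (v j) * X_sub_C_mul_derivative_X_sub_C_pow a i

theorem iSup_span_X_sub_C_pow_le_nablaPullback {E : Submodule R[X] (ι → R[X])} (a : R)
    (s : Finset ℕ) (F : ℕ → Set (ι → R))
    (hE : ⨆ i ∈ s, Submodule.span R[X]
      ((fun v : ι → R => fun j => (X - C a) ^ i * C (v j)) '' F i) ≤ E) :
    ⨆ i ∈ s, Submodule.span R[X]
      ((fun v : ι → R => fun j => (X - C a) ^ i * C (v j)) '' F i) ≤ nablaPullback E (X - C a) :=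
  iSup₂_le fun i hi => Submodule.span_le.2 <| by
    rintro _ ⟨v, hv, rfl⟩
    exact X_sub_C_pow_mul_C_mem_nablaPullback a i v <| hE <|
      Submodule.mem_iSup_of_mem i <| Submodule.mem_iSup_of_mem hi <|
        Submodule.subset_span ⟨v, hv, rfl⟩

end Polynomial

theorem stmt_14_general (A : Type*) [CommRing A] (d e n : ℕ)
    (πs : Fin e → A) (κ : Fin e)
    (Fil : ℤ → Submodule A (Fin d → A))
    (E : Submodule (Polynomial A) (Fin d → Polynomial A))
    (hE : E = ⨆ i ∈ Finset.range (n + 1),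
      Submodule.span (Polynomial A)
        ((fun v : Fin d → A => fun j => (X - C (πs κ)) ^ i * C (v j)) ''
          (Fil (-(i : ℤ)) : Set (Fin d → A)))) :
    (∀ x ∈ E, ∃ z ∈ E, ∀ j, (X - C (πs κ)) * (X * derivative (x j)) = X * z j)
    ∧ ∀ x ∈ E, ∃ z ∈ E, ∀ j,
        (∏ κ' : Fin e, (X - C (πs κ'))) * (X * derivative (x j)) = X * z j := by
  have hle : E ≤ nablaPullback E (X - C (πs κ)) := by
    have := iSup_span_X_sub_C_pow_le_nablaPullback (πs κ) (Finset.range (n + 1))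
      (fun i => (Fil (-(i : ℤ)) : Set (Fin d → A))) hE.ge
    rwa [← hE] at this
  have hdvd : X - C (πs κ) ∣ ∏ κ' : Fin e, (X - C (πs κ')) :=
    Finset.dvd_prod_of_mem _ (Finset.mem_univ κ)
  exact ⟨fun x hx => (hle hx).2, fun x hx => (nablaPullback_mono hdvd (hle hx)).2⟩

theorem stmt_14 (A : Type*) [CommRing A] (d e n : ℕ)
    (πs : Fin e → A) (κ : Fin e)
    (Fil : ℤ → Submodule A (Fin d → A))
    (hdec : ∀ i j : ℤ, i ≤ j → Fil j ≤ Fil i)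
    (hbot : Fil 1 = ⊥) (htop : Fil (-(n : ℤ)) = ⊤)
    (hsummand : ∀ i : ℤ, ∃ q : Submodule A (Fin d → A), IsCompl (Fil i) q)
    (E : Submodule (Polynomial A) (Fin d → Polynomial A))
    (hE : E = ⨆ i ∈ Finset.range (n + 1),
      Submodule.span (Polynomial A)
        ((fun v : Fin d → A => fun j => (X - C (πs κ)) ^ i * C (v j)) ''
          (Fil (-(i : ℤ)) : Set (Fin d → A)))) :
    (∀ x ∈ E, ∃ z ∈ E, ∀ j, (X - C (πs κ)) * (X * derivative (x j)) = X * z j)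
    ∧ ∀ x ∈ E, ∃ z ∈ E, ∀ j,
        (∏ κ' : Fin e, (X - C (πs κ'))) * (X * derivative (x j)) = X * z j :=
  stmt_14_general A d e n πs κ Fil E hE
end
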